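/- Let 0 < α < 1 and t > 0. Then F_{t,α}(s) = o(s^N) as s → 0⁺ for every natural number N. -/

import Mathlib

/-! For `Re z ≥ 0` one has `Re z^α ≥ cos(απ/2) |z|^α`, so with `c = t cos(απ/2) > 0` the
integrand satisfies `|e^{zs - t z^α}| ≤ exp(s Re z - (c/2) (Re z)^α - (c/2) |Im z|^α)`. This decay
in `Im z`, uniform on vertical strips, lets Cauchy's theorem move the line of integration from
`Re z = 1` to `Re z = 1/s`, where the bound gives `|F_{t,α}(s)| ≤ C exp(-(c/2) s^{-α}) = o(s^N)`. -/

open MeasureTheory Complex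

/-- The subordinator `F_{t,α}(s) = (1/2πi) ∫_{σ-i∞}^{σ+i∞} e^{zs - t z^α} dz` for `s ≥ 0`
(and `0` for `s < 0`), parametrized along the vertical line `z = 1 + iy` (the integral is
independent of the choice `σ > 0`); the principal branch of `z^α` has `Re z^α > 0` for
`Re z > 0` when `0 < α < 1`. -/
noncomputable def subordinator (t α : ℝ) (s : ℝ) : ℝ :=
  if s < 0 then 0
  else (2 * Real.pi)⁻¹ *
    (∫ y : ℝ, Complex.exp (((1 : ℂ) + (y : ℂ) * Complex.I) * (s : ℂ)
      - (t : ℂ) * (((1 : ℂ) + (y : ℂ) * Complex.I) ^ (α : ℂ)))).re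

open Set Real Filter Topology Asymptotics intervalIntegral
open scoped Interval

theorem integral_vertical_eq_of_differentiableOn {E : Type*} [NormedAddCommGroup E]
    [NormedSpace ℂ E] {f : ℂ → E} {σ₁ σ₂ : ℝ} (hf : DifferentiableOn ℂ f (re ⁻¹' [[σ₁, σ₂]]))
    (hf₁ : Integrable fun y : ℝ => f (σ₁ + y * I)) (hf₂ : Integrable fun y : ℝ => f (σ₂ + y * I))
    {B : ℝ → ℝ} (hB : Tendsto B atTop (𝓝 0))
    (hfB : ∀ x ∈ [[σ₁, σ₂]], ∀ y : ℝ, ‖f (x + y * I)‖ ≤ B |y|) :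
    ∫ y : ℝ, f (σ₁ + y * I) = ∫ y : ℝ, f (σ₂ + y * I) := by
  have hrect (R : ℝ) : I • ((∫ y in -R..R, f (σ₂ + y * I)) - ∫ y in -R..R, f (σ₁ + y * I)) =
      (∫ x in σ₁..σ₂, f (x + R * I)) - ∫ x in σ₁..σ₂, f (x + ↑(-R) * I) := by
    have := integral_boundary_rect_eq_zero_of_differentiableOn f (σ₁ + ↑(-R) * I)
      (σ₂ + R * I) (hf.mono fun z hz => by simpa using hz.1)
    simp only [add_re, ofReal_re, mul_re, I_re, mul_zero, ofReal_im, I_im, mul_one, sub_self,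
      add_zero, add_im, mul_im, zero_add] at this
    rw [smul_sub, ← sub_eq_zero, ← this]
    abel
  have hhor (R : ℝ) : ‖∫ x in σ₁..σ₂, f (x + R * I)‖ ≤ B |R| * |σ₂ - σ₁| :=
    norm_integral_le_of_norm_le_const fun x hx => hfB x (uIoc_subset_uIcc hx) R
  have hB' : Tendsto (fun R : ℝ => B |R| * |σ₂ - σ₁|) atTop (𝓝 0) := by
    simpa using (hB.comp tendsto_abs_atTop_atTop).mul_const |σ₂ - σ₁|
  have hhor_lim : Tendsto (fun R : ℝ => I • ((∫ y in -R..R, f (σ₂ + y * I)) -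
      ∫ y in -R..R, f (σ₁ + y * I))) atTop (𝓝 0) := by
    simp_rw [hrect]
    simpa using (squeeze_zero_norm hhor hB').sub
      (squeeze_zero_norm (fun R => hhor (-R)) (by simpa using hB'))
  have hvert_lim := ((intervalIntegral_tendsto_integral hf₂ tendsto_neg_atTop_atBot
    tendsto_id).sub (intervalIntegral_tendsto_integral hf₁ tendsto_neg_atTop_atBot
    tendsto_id)).const_smul I
  have := tendsto_nhds_unique hvert_lim hhor_lim
  rw [smul_eq_zero, sub_eq_zero] at this
  exact (this.resolve_left I_ne_zero).symm

theorem integrable_exp_neg_mul_abs_rpow {b p : ℝ} (hb : 0 < b) (hp : 0 < p) :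
    Integrable fun y : ℝ => exp (-b * |y| ^ p) := by
  have hpos : IntegrableOn (fun y : ℝ => exp (-b * |y| ^ p)) (Ioi 0) := by
    refine (integrableOn_rpow_mul_exp_neg_mul_rpow (s := 0) (by norm_num) hp hb).congr_fun
      (fun y hy => ?_) measurableSet_Ioi
    simp [abs_of_pos (mem_Ioi.mp hy)]
  have hneg := (neg_zero (G := ℝ) ▸ hpos).comp_neg_Iio
  simp only [abs_neg] at hneg
  rw [← integrableOn_univ, ← Iio_union_Ici (a := (0:ℝ)), integrableOn_union,
    integrableOn_Ici_iff_integrableOn_Ioi]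
  exact ⟨hneg, hpos⟩

theorem isLittleO_exp_neg_mul_inv_rpow {a α : ℝ} (ha : 0 < a) (hα : 0 < α) (r : ℝ) :
    (fun s : ℝ => exp (-a * s⁻¹ ^ α)) =o[𝓝[>] 0] fun s => s ^ r := by
  refine ((isLittleO_exp_neg_mul_rpow_atTop ha (-r / α)).comp_tendsto
    ((tendsto_rpow_atTop hα).comp tendsto_inv_nhdsGT_zero)).congr' .rfl ?_
  filter_upwards [self_mem_nhdsWithin] with s hs
  rw [Function.comp_apply, Function.comp_apply, ← rpow_mul (inv_nonneg.2 (le_of_lt hs)),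
    mul_div_cancel₀ _ hα.ne', inv_rpow (le_of_lt hs), rpow_neg (le_of_lt hs), inv_inv]

theorem cos_mul_pi_div_two_mul_rpow_le_re_cpow {α : ℝ} (hα : |α| ≤ 2) {z : ℂ}
    (hz : 0 ≤ z.re) : Real.cos (α * π / 2) * ‖z‖ ^ α ≤ (z ^ (α : ℂ)).re := by
  rw [cpow_ofReal_re, mul_comm]
  refine mul_le_mul_of_nonneg_left ?_ (rpow_nonneg (norm_nonneg z) α)
  rw [← Real.cos_abs, ← Real.cos_abs (arg z * α)]
  have harg : |arg z| ≤ π / 2 := abs_arg_le_pi_div_two_iff.2 hz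
  have hαπ : |α * π / 2| = |α| * (π / 2) := by
    rw [abs_div, abs_mul, abs_of_pos pi_pos, abs_two, mul_div_assoc]
  refine cos_le_cos_of_nonneg_of_le_pi (abs_nonneg _) ?_ ?_
  · rw [hαπ]
    nlinarith [pi_pos]
  · rw [hαπ, abs_mul, mul_comm]
    exact mul_le_mul_of_nonneg_left harg (abs_nonneg α)

noncomputable def subordinatorIntegrand (t α s : ℝ) (z : ℂ) : ℂ :=
  Complex.exp (z * s - t * z ^ (α : ℂ))

noncomputable def subordinatorDecay (t α : ℝ) : ℝ :=
  t * Real.cos (α * π / 2) / 2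

section Integrand

variable {t α s : ℝ}

theorem subordinatorDecay_pos (ht : 0 < t) (hα0 : -1 < α) (hα1 : α < 1) :
    0 < subordinatorDecay t α :=
  half_pos (mul_pos ht (cos_pos_of_mem_Ioo ⟨by nlinarith [pi_pos], by nlinarith [pi_pos]⟩))

theorem subordinator_eq_integral (hs : 0 ≤ s) : subordinator t α s =
    (2 * π)⁻¹ * (∫ y : ℝ, subordinatorIntegrand t α s (1 + y * I)).re := by
  rw [subordinator, if_neg (not_lt.2 hs)]
  rfl

theorem differentiableOn_subordinatorIntegrand :
    DifferentiableOn ℂ (subordinatorIntegrand t α s) slitPlane := fun _ hz =>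
  ((differentiableAt_id.mul_const _).sub
    ((differentiableAt_id.cpow_const hz).const_mul _)).cexp.differentiableWithinAt

theorem norm_subordinatorIntegrand_le (ht : 0 ≤ t) (hα0 : 0 ≤ α) (hα1 : α ≤ 1) {x : ℝ}
    (hx : 0 ≤ x) (y : ℝ) : ‖subordinatorIntegrand t α s (x + y * I)‖ ≤
      exp (x * s - subordinatorDecay t α * x ^ α - subordinatorDecay t α * |y| ^ α) := by
  set z : ℂ := x + y * I
  have hre : (z * s - t * z ^ (α : ℂ)).re = x * s - t * (z ^ (α : ℂ)).re := by
    simp [z]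
  have hcos : 0 ≤ Real.cos (α * π / 2) :=
    cos_nonneg_of_mem_Icc ⟨by nlinarith [pi_pos], by nlinarith [pi_pos]⟩
  have hx_le : x ^ α ≤ ‖z‖ ^ α := rpow_le_rpow hx
    (by simpa [z, abs_of_nonneg hx] using abs_re_le_norm z) hα0
  have hy_le : |y| ^ α ≤ ‖z‖ ^ α := rpow_le_rpow (abs_nonneg y)
    (by simpa [z] using abs_im_le_norm z) hα0
  have hre_cpow := cos_mul_pi_div_two_mul_rpow_le_re_cpow
    (abs_le.2 ⟨by linarith, by linarith⟩ : |α| ≤ 2) (by simpa [z] using hx : 0 ≤ z.re)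
  rw [subordinatorIntegrand, norm_exp, hre, exp_le_exp, subordinatorDecay]
  nlinarith [mul_nonneg ht hcos]

theorem integrable_subordinatorIntegrand (ht : 0 < t) (hα0 : 0 < α) (hα1 : α < 1) {x : ℝ}
    (hx : 0 < x) : Integrable fun y : ℝ => subordinatorIntegrand t α s (x + y * I) := by
  refine ((integrable_exp_neg_mul_abs_rpow (subordinatorDecay_pos ht (by linarith) hα1)
    hα0).const_mul (exp (x * s - subordinatorDecay t α * x ^ α))).mono' ?_ (.of_forall fun y => ?_)
  · refine (differentiableOn_subordinatorIntegrand.continuousOn.comp_continuous (by fun_prop)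
      fun y => ?_).aestronglyMeasurable
    exact mem_slitPlane_iff.2 (.inl (by simpa using hx))
  · refine (norm_subordinatorIntegrand_le ht.le hα0.le hα1.le hx.le y).trans_eq ?_
    rw [← Real.exp_add]
    ring_nf

theorem integral_subordinatorIntegrand_eq (ht : 0 < t) (hα0 : 0 < α) (hα1 : α < 1)
    (hs : 0 ≤ s) {σ₁ σ₂ : ℝ} (hσ₁ : 0 < σ₁) (hσ₂ : 0 < σ₂) :
    ∫ y : ℝ, subordinatorIntegrand t α s (σ₁ + y * I) =
      ∫ y : ℝ, subordinatorIntegrand t α s (σ₂ + y * I) := by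
  refine integral_vertical_eq_of_differentiableOn
    (differentiableOn_subordinatorIntegrand.mono fun z hz => mem_slitPlane_iff.2 (.inl ?_))
    (integrable_subordinatorIntegrand ht hα0 hα1 hσ₁)
    (integrable_subordinatorIntegrand ht hα0 hα1 hσ₂)
    (B := fun r => exp (max σ₁ σ₂ * s - subordinatorDecay t α * r ^ α)) ?_ fun x hx y => ?_
  · exact (lt_min hσ₁ hσ₂).trans_le hz.1
  · have h := (tendsto_rpow_atTop hα0).const_mul_atTop (subordinatorDecay_pos ht (by linarith) hα1)
    simpa only [sub_eq_add_neg, Function.comp_def] using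
      tendsto_exp_atBot.comp (tendsto_atBot_add_const_left _ _ (tendsto_neg_atTop_atBot.comp h))
  · have hx0 : 0 < x := (lt_min hσ₁ hσ₂).trans_le hx.1
    refine (norm_subordinatorIntegrand_le ht.le hα0.le hα1.le hx0.le y).trans (exp_le_exp.2 ?_)
    have := mul_le_mul_of_nonneg_right hx.2 hs
    have := mul_nonneg (subordinatorDecay_pos ht (by linarith) hα1).le (rpow_nonneg hx0.le α)
    linarith

theorem abs_subordinator_le (ht : 0 < t) (hα0 : 0 < α) (hα1 : α < 1) (hs : 0 < s) :
    |subordinator t α s| ≤ (2 * π)⁻¹ * Real.exp 1 *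
      (∫ y : ℝ, exp (-subordinatorDecay t α * |y| ^ α)) *
        exp (-subordinatorDecay t α * s⁻¹ ^ α) := by
  have hbound (y : ℝ) : ‖subordinatorIntegrand t α s (s⁻¹ + y * I)‖ ≤
      exp (1 - subordinatorDecay t α * s⁻¹ ^ α) * exp (-subordinatorDecay t α * |y| ^ α) := by
    refine (norm_subordinatorIntegrand_le ht.le hα0.le hα1.le (inv_pos.2 hs).le y).trans_eq ?_
    rw [← Real.exp_add, inv_mul_cancel₀ hs.ne']
    ring_nf
  have hint : ‖∫ y : ℝ, subordinatorIntegrand t α s (1 + y * I)‖ ≤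
      exp (1 - subordinatorDecay t α * s⁻¹ ^ α) *
        ∫ y : ℝ, exp (-subordinatorDecay t α * |y| ^ α) := by
    rw [← MeasureTheory.integral_const_mul, ← ofReal_one,
      integral_subordinatorIntegrand_eq ht hα0 hα1 hs.le one_pos (inv_pos.2 hs)]
    have hdecay := integrable_exp_neg_mul_abs_rpow (subordinatorDecay_pos ht (by linarith) hα1) hα0
    exact norm_integral_le_of_norm_le (hdecay.const_mul _) (.of_forall hbound)
  rw [subordinator_eq_integral hs.le, abs_mul, abs_of_pos (by positivity : (0:ℝ) < (2 * π)⁻¹)]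
  calc (2 * π)⁻¹ * |(∫ y : ℝ, subordinatorIntegrand t α s (1 + y * I)).re|
      ≤ (2 * π)⁻¹ * (exp (1 - subordinatorDecay t α * s⁻¹ ^ α) *
          ∫ y : ℝ, exp (-subordinatorDecay t α * |y| ^ α)) := by
        gcongr
        exact (abs_re_le_norm _).trans hint
    _ = _ := by rw [sub_eq_add_neg, Real.exp_add, ← neg_mul]; ring

end Integrand

open Asymptotics in
theorem subordinator_littleO (α t : ℝ) (hα0 : 0 < α) (hα1 : α < 1) (ht : 0 < t) :
    ∀ N : ℕ, (fun s : ℝ => subordinator t α s) =o[nhdsWithin 0 (Set.Ioi 0)]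
      fun s : ℝ => s ^ N := by
  intro N
  have hO : (fun s : ℝ => subordinator t α s) =O[𝓝[>] 0]
      fun s => exp (-subordinatorDecay t α * s⁻¹ ^ α) :=
    .of_bound _ (eventually_nhdsWithin_of_forall fun s hs => by
      simpa [abs_of_pos (exp_pos _)] using abs_subordinator_le ht hα0 hα1 hs)
  simpa using hO.trans_isLittleO
    (isLittleO_exp_neg_mul_inv_rpow (subordinatorDecay_pos ht (by linarith) hα1) hα0 N)
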